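/- Let n, N ≥ 1 and let λ = (λ_1 ≥ … ≥ λ_n ≥ 0) be a partition with at most n parts. Then applying the substitution ∫_Y to det(x_i^{λ_j+n−j})_{1≤i,j≤n} · det(x_i^{n−j})_{1≤i,j≤n} (which equals S_λ(X)·Δ(X)^2) yields: ∫_Y ( det(x_i^{λ_j+n−j}) · det(x_i^{n−j}) ) = (−1)^{n(n−1)/2} · n! · det( Λ^{λ_i+(n−1)−i+j}(Y) )_{1≤i,j≤n}. By the dual Jacobi–Trudi formula the right-hand determinant is the Schur polynomial S_{μ'}(Y) for μ = λ + ((n−1)^n), so (1/n!)∫_Y S_λ(X)Δ(X)^2 = (−1)^{n(n−1)/2} S_{(λ+(n−1)^n)'}(Y). -/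

import Mathlib

/-!
Expanding both determinants writes `det(x_i^{a_j}) ⋅ det(x_i^{b_j})` as a signed sum over pairs
of permutations `(σ, τ)` of monomials. Since `∫_Y` of a monomial only sees the multiset of its
exponents, it is invariant under permuting the variables; relabelling by `τ`, the pair
`(σ, τ)` contributes `sign(σ⁻¹τ) ∏_k Λ^{a_{σ⁻¹τ k} + b_k}(Y)`. For fixed `τ` the sum over `σ`
is `det(Λ^{a_i + b_j}(Y))`, and the `n!` choices of `τ` give the factor `n!`. Finally,
reversing the columns turns `b_j = n - 1 - j` into `b_j = j` at the cost of the sign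
`(-1)^{n choose 2}` of the reversal permutation.
-/

/-- `Λ N p` is the `p`-th elementary symmetric polynomial in `N` variables,
with the convention that it vanishes for `p < 0` (and for `p > N`). -/
noncomputable def Λ (N : ℕ) (p : ℤ) : MvPolynomial (Fin N) ℤ :=
  if 0 ≤ p then MvPolynomial.esymm (Fin N) ℤ p.toNat else 0

/-- The substitution `∫_Y` sending each monomial `x_1^{d_1} ⋯ x_n^{d_n}` to
`Λ^{d_1}(Y) ⋯ Λ^{d_n}(Y)`, extended `ℤ`-linearly. -/
noncomputable def intY (n N : ℕ) (P : MvPolynomial (Fin n) ℤ) :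
    MvPolynomial (Fin N) ℤ :=
  ∑ d ∈ P.support, P.coeff d • ∏ i, Λ N ((d i : ℤ))

open MvPolynomial Equiv

noncomputable def intYLinear (n N : ℕ) :
    MvPolynomial (Fin n) ℤ →ₗ[ℤ] MvPolynomial (Fin N) ℤ :=
  Finsupp.linearCombination ℤ (fun d : Fin n →₀ ℕ => ∏ i, Λ N (d i)) ∘ₗ
    (AddMonoidAlgebra.coeffLinearEquiv ℤ).toLinearMap

theorem intYLinear_apply (n N : ℕ) (P : MvPolynomial (Fin n) ℤ) :
    intYLinear n N P = intY n N P :=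
  rfl

theorem intY_monomial (n N : ℕ) (d : Fin n →₀ ℕ) (c : ℤ) :
    intY n N (monomial d c) = c • ∏ i, Λ N (d i) :=
  Finsupp.linearCombination_single ℤ c d

theorem intY_prod_X_pow (n N : ℕ) (d : Fin n → ℕ) :
    intY n N (∏ i, X i ^ d i) = ∏ i, Λ N (d i) := by
  have hmonomial : (∏ i, X i ^ d i : MvPolynomial (Fin n) ℤ) =
      monomial (Finsupp.equivFunOnFinite.symm d) 1 := by
    rw [monomial_eq, Finsupp.prod_fintype] <;> simp
  rw [hmonomial, intY_monomial, one_smul]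
  rfl

theorem intY_prod_X_perm_pow (n N : ℕ) (τ : Perm (Fin n)) (d : Fin n → ℕ) :
    intY n N (∏ k, X (τ k) ^ d k) = ∏ k, Λ N (d k) := by
  have hX : ∏ k, (X (τ k) : MvPolynomial (Fin n) ℤ) ^ d k = ∏ i, X i ^ d (τ.symm i) :=
    Fintype.prod_equiv τ _ _ fun k => by simp
  rw [hX, intY_prod_X_pow]
  exact Fintype.prod_equiv τ.symm _ _ fun i => rfl

theorem det_X_pow_mul_det_X_pow {R ι : Type*} [CommRing R] [Fintype ι] [DecidableEq ι]
    (e₁ e₂ : ι → ℕ) :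
    (Matrix.of fun i j => (X i : MvPolynomial ι R) ^ e₁ j).det *
        (Matrix.of fun i j => (X i : MvPolynomial ι R) ^ e₂ j).det =
      ∑ σ : Perm ι, ∑ τ : Perm ι,
        Perm.sign (σ⁻¹ * τ) • ∏ k, X (τ k) ^ (e₁ ((σ⁻¹ * τ) k) + e₂ k) := by
  rw [Matrix.det_apply, Matrix.det_apply, Finset.sum_mul_sum]
  refine Finset.sum_congr rfl fun σ _ => Finset.sum_congr rfl fun τ _ => ?_
  have hσ :
      ∏ i, (X (σ i) : MvPolynomial ι R) ^ e₁ i = ∏ k, X (τ k) ^ e₁ ((σ⁻¹ * τ) k) :=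
    Fintype.prod_equiv (τ⁻¹ * σ) _ _ fun i => by simp
  simp only [Matrix.of_apply]
  rw [smul_mul_smul_comm, Perm.sign_mul, Perm.sign_inv, hσ, ← Finset.prod_mul_distrib]
  simp only [pow_add]

theorem intY_det_mul_det (n N : ℕ) (e₁ e₂ : Fin n → ℕ) :
    intY n N
        ((Matrix.of fun i j : Fin n => (X i : MvPolynomial (Fin n) ℤ) ^ e₁ j).det *
          (Matrix.of fun i j : Fin n => (X i : MvPolynomial (Fin n) ℤ) ^ e₂ j).det) =
      n.factorial • (Matrix.of fun i j : Fin n => Λ N ((e₁ i + e₂ j : ℕ) : ℤ)).det := by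
  have hτ : ∀ τ : Perm (Fin n),
      ∑ σ : Perm (Fin n),
          Perm.sign (σ⁻¹ * τ) • ∏ k, Λ N ((e₁ ((σ⁻¹ * τ) k) + e₂ k : ℕ) : ℤ) =
        (Matrix.of fun i j : Fin n => Λ N ((e₁ i + e₂ j : ℕ) : ℤ)).det := fun τ => by
    rw [Matrix.det_apply]
    exact Fintype.sum_equiv ((Equiv.inv _).trans (Equiv.mulRight τ)) _ _ fun σ => rfl
  rw [det_X_pow_mul_det_X_pow, ← intYLinear_apply]
  simp only [map_sum, LinearMap.map_smul_of_tower, intYLinear_apply, intY_prod_X_perm_pow]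
  rw [Finset.sum_comm]
  simp only [hτ, Finset.sum_const, Finset.card_univ, Fintype.card_perm, Fintype.card_fin]

theorem Fin.revPerm_mul_finRotate (n : ℕ) :
    (Fin.revPerm : Perm (Fin (n + 1))) * finRotate (n + 1) =
      finSuccEquivLast.symm.permCongr (Fin.revPerm : Perm (Fin n)).optionCongr := by
  ext i
  refine Fin.lastCases ?_ (fun i => ?_) i
  · simp [Perm.mul_apply, permCongr_apply, finSuccEquivLast_last]
  · simp [Perm.mul_apply, permCongr_apply, optionCongr_apply, finSuccEquivLast_castSucc,
      finSuccEquivLast_symm_some, Fin.val_rev]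

theorem Fin.sign_revPerm_succ (n : ℕ) :
    Perm.sign (Fin.revPerm : Perm (Fin (n + 1))) =
      Perm.sign (Fin.revPerm : Perm (Fin n)) * (-1) ^ n := by
  have h := congrArg Perm.sign (Fin.revPerm_mul_finRotate n)
  rw [Perm.sign_mul, sign_finRotate, Perm.sign_permCongr, optionCongr_sign,
    Nat.add_sub_cancel] at h
  rw [← h, mul_assoc, Int.units_mul_self, mul_one]

theorem Fin.sign_revPerm (n : ℕ) :
    Perm.sign (Fin.revPerm : Perm (Fin n)) = (-1) ^ n.choose 2 := by
  induction n with
  | zero => rfl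
  | succ n ih =>
    rw [Fin.sign_revPerm_succ, ih, Nat.choose_succ_succ', Nat.choose_one_right, pow_add, mul_comm]

theorem det_of_add_rev {R : Type*} [CommRing R] (n : ℕ) (f : ℕ → R) (a : Fin n → ℕ) :
    (Matrix.of fun i j : Fin n => f (a i + (n - 1 - (j : ℕ)))).det =
      (-1) ^ n.choose 2 * (Matrix.of fun i j : Fin n => f (a i + j)).det := by
  have hrev : (Matrix.of fun i j : Fin n => f (a i + (n - 1 - (j : ℕ)))) =
      (Matrix.of fun i j : Fin n => f (a i + j)).submatrix id Fin.revPerm := by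
    ext i j : 1
    simp only [Matrix.submatrix_apply, Matrix.of_apply, id, Fin.revPerm_apply, Fin.val_rev]
    congr 2
    omega
  rw [hrev, Matrix.det_permute', Fin.sign_revPerm]
  push_cast
  ring

theorem intY_schur_vandermonde_sq_general
    (n N : ℕ) (lam : Fin n → ℕ) :
    intY n N
        ((Matrix.of fun i j : Fin n =>
            MvPolynomial.X i ^ (lam j + (n - 1 - (j : ℕ)))).det *
          (Matrix.of fun i j : Fin n =>
            (MvPolynomial.X i : MvPolynomial (Fin n) ℤ) ^ (n - 1 - (j : ℕ))).det)
      = ((-1 : ℤ) ^ (n * (n - 1) / 2) * (Nat.factorial n : ℤ)) •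
          (Matrix.of fun i j : Fin n =>
            Λ N ((lam i + (n - 1 - (i : ℕ)) + (j : ℕ) : ℕ))).det := by
  rw [intY_det_mul_det,
    det_of_add_rev n (fun p : ℕ => Λ N p) fun i => lam i + (n - 1 - (i : ℕ)),
    ← Nat.choose_two_right, nsmul_eq_mul, zsmul_eq_mul]
  push_cast
  ring

/-- The case `k = 1`: applying `∫_Y` to `S_λ(X) Δ(X)^2`, written as
`det(x_i^{λ_j+n−j}) ⋅ det(x_i^{n−j})`, gives (up to sign and the factor `n!`)
the Schur polynomial `S_{(λ+(n−1)^n)'}(Y)`, expressed through the dual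
Jacobi–Trudi determinant `det(Λ^{λ_i+(n−1)−i+j}(Y))`. -/
theorem intY_schur_vandermonde_sq
    (n N : ℕ) (hn : 1 ≤ n) (hN : 1 ≤ N)
    (lam : Fin n → ℕ) (hlam : Antitone lam) :
    intY n N
        ((Matrix.of fun i j : Fin n =>
            MvPolynomial.X i ^ (lam j + (n - 1 - (j : ℕ)))).det *
          (Matrix.of fun i j : Fin n =>
            (MvPolynomial.X i : MvPolynomial (Fin n) ℤ) ^ (n - 1 - (j : ℕ))).det)
      = ((-1 : ℤ) ^ (n * (n - 1) / 2) * (Nat.factorial n : ℤ)) •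
          (Matrix.of fun i j : Fin n =>
            Λ N ((lam i + (n - 1 - (i : ℕ)) + (j : ℕ) : ℕ))).det :=
  intY_schur_vandermonde_sq_general n N lam
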